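/- Let f : [a,b] → [a,b] be continuous, strictly increasing on [a, x_c] and strictly decreasing on [x_c, b] (unimodal with turning point x_c). If x < y are points in [a,b] and the itineraries of x and y (sequences of L/R/C relative to x_c under iteration of f) first differ at index j, and both itineraries have no C before index j, then the number of R's among the first j symbols determines the order: if that count is even then f^j(x) < f^j(y), and if odd then f^j(x) > f^j(y). -/

import Mathlib

inductive Sym3 | L | C | R
deriving DecidableEq

/-- The itinerary of `x` under `f` relative to the turning point `xc`. -/
noncomputable def itin (f : ℝ → ℝ) (xc x : ℝ) (i : ℕ) : Sym3 :=
  if f^[i] x < xc then Sym3.L else if f^[i] x = xc then Sym3.C else Sym3.R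

/-!
Along a common itinerary without `C`, the two orbits stay on the same side of `xc` at every
step, so each step preserves their order (side `L`, where `f` increases) or reverses it
(side `R`, where `f` decreases). After `j` steps the order has been reversed once per `R`.
-/

section Itinerary

variable {f : ℝ → ℝ} {xc x : ℝ} {i : ℕ}

lemma itin_eq_L_iff : itin f xc x i = Sym3.L ↔ f^[i] x < xc := by
  unfold itin
  split_ifs <;> simp_all

lemma itin_eq_R_iff : itin f xc x i = Sym3.R ↔ xc < f^[i] x := by
  unfold itin
  split_ifs with hlt heq
  · simp [hlt.not_gt]
  · simp [heq]
  · simp [lt_of_le_of_ne (not_lt.1 hlt) (Ne.symm heq)]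

noncomputable def numR (f : ℝ → ℝ) (xc x : ℝ) (n : ℕ) : ℕ :=
  ((Finset.range n).filter (fun i => itin f xc x i = Sym3.R)).card

lemma numR_succ (n : ℕ) :
    numR f xc x (n + 1) = numR f xc x n + if itin f xc x n = Sym3.R then 1 else 0 := by
  unfold numR
  rw [Finset.range_add_one, Finset.filter_insert]
  split_ifs <;> simp

end Itinerary

theorem order_iterate_of_common_itin {f : ℝ → ℝ} {a b xc x y : ℝ}
    (hmono : StrictMonoOn f (Set.Icc a xc)) (hanti : StrictAntiOn f (Set.Icc xc b))
    (hmaps : Set.MapsTo f (Set.Icc a b) (Set.Icc a b))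
    (hx : x ∈ Set.Icc a b) (hy : y ∈ Set.Icc a b) (hxy : x < y) (n : ℕ)
    (hpre : ∀ i < n, itin f xc x i = itin f xc y i)
    (hnoC : ∀ i < n, itin f xc x i ≠ Sym3.C) :
    (Even (numR f xc x n) → f^[n] x < f^[n] y) ∧
    (Odd (numR f xc x n) → f^[n] y < f^[n] x) := by
  induction n with
  | zero => simp [numR, hxy]
  | succ n ih =>
    obtain ⟨ihEven, ihOdd⟩ :=
      ih (fun i hi => hpre i (by omega)) (fun i hi => hnoC i (by omega))
    have hxn := hmaps.iterate n hx
    have hyn := hmaps.iterate n hy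
    have hsame := hpre n n.lt_add_one
    rw [numR_succ, Function.iterate_succ_apply', Function.iterate_succ_apply']
    rcases hside : itin f xc x n with _ | _ | _
    · have hxL := itin_eq_L_iff.1 hside
      have hyL := itin_eq_L_iff.1 (hsame ▸ hside)
      have hxm : f^[n] x ∈ Set.Icc a xc := ⟨hxn.1, hxL.le⟩
      have hym : f^[n] y ∈ Set.Icc a xc := ⟨hyn.1, hyL.le⟩
      simp only [reduceCtorEq, if_false, add_zero]
      exact ⟨fun h => hmono hxm hym (ihEven h), fun h => hmono hym hxm (ihOdd h)⟩
    · exact absurd hside (hnoC n n.lt_add_one)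
    · have hxR := itin_eq_R_iff.1 hside
      have hyR := itin_eq_R_iff.1 (hsame ▸ hside)
      have hxm : f^[n] x ∈ Set.Icc xc b := ⟨hxR.le, hxn.2⟩
      have hym : f^[n] y ∈ Set.Icc xc b := ⟨hyR.le, hyn.2⟩
      simp only [if_true, Nat.even_add_one, Nat.odd_add_one, Nat.not_even_iff_odd,
        Nat.not_odd_iff_even]
      exact ⟨fun h => hanti hym hxm (ihOdd h), fun h => hanti hxm hym (ihEven h)⟩

theorem itinerary_parity_order_general (f : ℝ → ℝ) (a b xc : ℝ)
    (hmono : StrictMonoOn f (Set.Icc a xc))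
    (hanti : StrictAntiOn f (Set.Icc xc b))
    (hmaps : Set.MapsTo f (Set.Icc a b) (Set.Icc a b))
    (x y : ℝ) (hx : x ∈ Set.Icc a b) (hy : y ∈ Set.Icc a b) (hxy : x < y)
    (j : ℕ)
    (hpre : ∀ i < j, itin f xc x i = itin f xc y i)
    (hnoC : ∀ i < j, itin f xc x i ≠ Sym3.C ∧ itin f xc y i ≠ Sym3.C) :
    (Even ((Finset.range j).filter (fun i => itin f xc x i = Sym3.R)).card →
      f^[j] x < f^[j] y) ∧
    (Odd ((Finset.range j).filter (fun i => itin f xc x i = Sym3.R)).card →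
      f^[j] y < f^[j] x) :=
  order_iterate_of_common_itin hmono hanti hmaps hx hy hxy j hpre fun i hi => (hnoC i hi).1

/-- For a continuous unimodal map, if the itineraries of `x < y` first differ at
index `j` with no `C` before index `j`, then the parity of the number of `R`'s in
the common prefix determines the order of `f^[j] x` and `f^[j] y`. -/
theorem itinerary_parity_order (f : ℝ → ℝ) (a b xc : ℝ)
    (hxc : xc ∈ Set.Ioo a b)
    (hcont : ContinuousOn f (Set.Icc a b))
    (hmono : StrictMonoOn f (Set.Icc a xc))
    (hanti : StrictAntiOn f (Set.Icc xc b))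
    (hmaps : Set.MapsTo f (Set.Icc a b) (Set.Icc a b))
    (x y : ℝ) (hx : x ∈ Set.Icc a b) (hy : y ∈ Set.Icc a b) (hxy : x < y)
    (j : ℕ)
    (hpre : ∀ i < j, itin f xc x i = itin f xc y i)
    (hne : itin f xc x j ≠ itin f xc y j)
    (hnoC : ∀ i < j, itin f xc x i ≠ Sym3.C ∧ itin f xc y i ≠ Sym3.C) :
    (Even ((Finset.range j).filter (fun i => itin f xc x i = Sym3.R)).card →
      f^[j] x < f^[j] y) ∧
    (Odd ((Finset.range j).filter (fun i => itin f xc x i = Sym3.R)).card →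
      f^[j] y < f^[j] x) :=
  itinerary_parity_order_general f a b xc hmono hanti hmaps x y hx hy hxy j hpre hnoC
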